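/- The Kleene meet ⊓ is term-definable in O3: for all x, y, x ⊓ y = ¬(¬x ⊔ ¬y), where x ⊔ y := ¬◇¬(x ∨ y) ∧ ((x → y) → ◇y) and ◇x := ¬x → x, with ∧, ∨, →, ¬ Cooper's operations; moreover ⊓ coincides with the minimum for the order 0 < ½ < 1. -/

import Mathlib

inductive O3 : Type | zero | half | one
deriving DecidableEq

open O3

def oneg : O3 → O3
  | zero => one | one => zero | half => half

def oand : O3 → O3 → O3
  | half, half => half | half, one => one | half, zero => zero
  | one, half => one | one, one => one | one, zero => zero
  | zero, _ => zero

def oor : O3 → O3 → O3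
  | half, half => half | half, one => one | half, zero => zero
  | one, _ => one
  | zero, half => zero | zero, one => one | zero, zero => zero

def oimp : O3 → O3 → O3
  | half, y => y | one, y => y | zero, _ => half

/-- designated values -/
def desig (x : O3) : Prop := x = half ∨ x = one

/-- Kleene meet: minimum w.r.t. 0 < ½ < 1 -/
def kmeet : O3 → O3 → O3
  | zero, _ => zero | _, zero => zero
  | half, _ => half | _, half => half
  | one, one => one

/-- Kleene join: maximum w.r.t. 0 < ½ < 1 -/
def kjoin : O3 → O3 → O3
  | one, _ => one | _, one => one
  | half, _ => half | _, half => half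
  | zero, zero => zero

/-- material implication ¬x ∨ y -/
def bimp (x y : O3) : O3 := oor (oneg x) y

def diam (x : O3) : O3 := oimp (oneg x) x

def osup (x y : O3) : O3 :=
  oand (oneg (diam (oneg (oor x y)))) (oimp (oimp x y) (diam y))

def ole : O3 → O3 → Prop
  | O3.zero, _ => True
  | _, O3.one => True
  | O3.half, O3.half => True
  | _, _ => False

/-!
On the three-element chain everything reduces to finite truth tables. The term `osup` evaluates to
the Kleene join (maximum), and since `oneg` is an order-reversing involution of `0 < ½ < 1`, the
De Morgan dual of the maximum is the minimum, which is the Kleene meet.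
-/

namespace O3

def rank : O3 → Fin 3
  | zero => 0 | half => 1 | one => 2

theorem rank_injective : Function.Injective rank := by
  intro x y h
  cases x <;> cases y <;> simp_all [rank]

theorem ole_iff_rank_le (x y : O3) : ole x y ↔ rank x ≤ rank y := by
  cases x <;> cases y <;> simp [ole, rank]

theorem rank_kmeet (x y : O3) : rank (kmeet x y) = min (rank x) (rank y) := by
  cases x <;> cases y <;> rfl

theorem ole_kmeet_left (x y : O3) : ole (kmeet x y) x := by
  rw [ole_iff_rank_le, rank_kmeet]
  exact min_le_left _ _

theorem ole_kmeet_right (x y : O3) : ole (kmeet x y) y := by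
  rw [ole_iff_rank_le, rank_kmeet]
  exact min_le_right _ _

theorem kmeet_eq_or (x y : O3) : kmeet x y = x ∨ kmeet x y = y := by
  rcases min_choice (rank x) (rank y) with h | h
  · exact Or.inl (rank_injective ((rank_kmeet x y).trans h))
  · exact Or.inr (rank_injective ((rank_kmeet x y).trans h))

theorem osup_eq_kjoin (x y : O3) : osup x y = kjoin x y := by
  cases x <;> cases y <;> rfl

theorem kmeet_eq_oneg_kjoin_oneg (x y : O3) : kmeet x y = oneg (kjoin (oneg x) (oneg y)) := by
  cases x <;> cases y <;> rfl

end O3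

theorem kmeet_term_definable :
    (∀ x y : O3, kmeet x y = oneg (osup (oneg x) (oneg y))) ∧
    (∀ x y : O3, ole (kmeet x y) x ∧ ole (kmeet x y) y ∧
      (kmeet x y = x ∨ kmeet x y = y)) := by
  refine ⟨fun x y => ?_, fun x y => ⟨ole_kmeet_left x y, ole_kmeet_right x y, kmeet_eq_or x y⟩⟩
  rw [osup_eq_kjoin, kmeet_eq_oneg_kjoin_oneg]
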